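/- arXiv:math/0608409 — 2 statements merged into one kernel-verified Lean document; each statement's English description precedes it below -/
import Mathlib

section
/- Let R be a multivariable skew Laurent polynomial ring of rank m over a division ring K, let φ : ℤ^m → ℝ be a group homomorphism, and let f, g ∈ R be nonzero with supp(g) ⊆ ker(φ). Then for every group homomorphism ψ : ℤ^m → ℝ one has ‖φ + ψ‖_f − ‖φ + ψ‖_g ≤ (‖φ‖_f − ‖φ‖_g) + (‖ψ‖_f − ‖ψ‖_g). -/
/-- A multivariable skew Laurent polynomial ring of rank `m` over a division ring `K`:
a ring `R` together with an inclusion of `K` and additive subgroups (`ℤ`-submodules)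
`V α ⊆ R` for `α ∈ ℤ^m` such that `R` is the internal direct sum of the `V α`,
`V α * V β = V (α + β)`, `V 0 = K`, and each `V α` is a one-dimensional left
`K`-vector space. -/
structure SkewLaurentRing (K : Type) [DivisionRing K] (m : ℕ) (R : Type) [Ring R] where
  /-- the inclusion of `K` into `R` as the degree-zero part -/
  incl : K →+* R
  /-- the graded components -/
  V : (Fin m → ℤ) → Submodule ℤ R
  /-- `R` is the internal direct sum `⊕_{α ∈ ℤ^m} V α` -/
  isInternal : DirectSum.IsInternal V
  /-- `V α · V β = V (α + β)` (product of additive subgroups) -/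
  mul_V : ∀ α β : Fin m → ℤ, V α * V β = V (α + β)
  /-- `V 0 = K` -/
  V_zero : ∀ x : R, x ∈ V 0 ↔ ∃ k : K, x = incl k
  /-- each `V α` is a one-dimensional left `K`-vector space: `V α = K · t` for some `t ≠ 0` -/
  oneDim : ∀ α : Fin m → ℤ, ∃ t ∈ V α, t ≠ 0 ∧ ∀ x ∈ V α, ∃ k : K, x = incl k * t

/-- `c` is the graded decomposition of `f`: a finitely supported family with
`c α ∈ V α` and `f = ∑_α c α`. -/
def IsDecomp {K : Type} [DivisionRing K] {m : ℕ} {R : Type} [Ring R]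
    (L : SkewLaurentRing K m R) (f : R) (c : (Fin m → ℤ) →₀ R) : Prop :=
  (∀ α, c α ∈ L.V α) ∧ f = c.sum fun _ x => x

/-- For a finite support set `S ⊆ ℤ^m` and a homomorphism `φ : ℤ^m → ℝ`,
`suppNorm φ S = max {φ α - φ β : α, β ∈ S}` (and `0` if `S = ∅`). -/
noncomputable def suppNorm {m : ℕ} (φ : (Fin m → ℤ) →+ ℝ) (S : Finset (Fin m → ℤ)) : ℝ :=
  ((S.image ⇑φ).max).unbotD 0 - ((S.image ⇑φ).min).untopD 0
lemma suppNorm_aux_max {m : ℕ} (φ : (Fin m → ℤ) →+ ℝ) {S : Finset (Fin m → ℤ)}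
    (hS : S.Nonempty) :
    ((S.image ⇑φ).max).unbotD 0 = (S.image ⇑φ).max' (hS.image _) := by
  rw [← Finset.coe_max' (hS.image _)]; rfl

lemma suppNorm_aux_min {m : ℕ} (φ : (Fin m → ℤ) →+ ℝ) {S : Finset (Fin m → ℤ)}
    (hS : S.Nonempty) :
    ((S.image ⇑φ).min).untopD 0 = (S.image ⇑φ).min' (hS.image _) := by
  rw [← Finset.coe_min' (hS.image _)]; rfl

noncomputable def suppNorm' {m : ℕ} (φ : (Fin m → ℤ) →+ ℝ) (S : Finset (Fin m → ℤ)) : ℝ :=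
  ((S.image ⇑φ).max).unbotD 0 - ((S.image ⇑φ).min).untopD 0

lemma suppNorm'_eq {m : ℕ} (φ : (Fin m → ℤ) →+ ℝ) {S : Finset (Fin m → ℤ)}
    (hS : S.Nonempty) :
    suppNorm' φ S = (S.image ⇑φ).max' (hS.image _) - (S.image ⇑φ).min' (hS.image _) := by
  rw [suppNorm', suppNorm_aux_max φ hS, suppNorm_aux_min φ hS]

lemma sub_le_suppNorm' {m : ℕ} (φ : (Fin m → ℤ) →+ ℝ) {S : Finset (Fin m → ℤ)}
    {α β : Fin m → ℤ} (hα : α ∈ S) (hβ : β ∈ S) :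
    φ α - φ β ≤ suppNorm' φ S := by
  have hS : S.Nonempty := ⟨α, hα⟩
  rw [suppNorm'_eq φ hS]
  gcongr
  · exact Finset.le_max' _ _ (Finset.mem_image_of_mem _ hα)
  · exact Finset.min'_le _ _ (Finset.mem_image_of_mem _ hβ)

lemma suppNorm'_attained {m : ℕ} (φ : (Fin m → ℤ) →+ ℝ) {S : Finset (Fin m → ℤ)}
    (hS : S.Nonempty) :
    ∃ α ∈ S, ∃ β ∈ S, suppNorm' φ S = φ α - φ β := by
  obtain ⟨α, hα, hα'⟩ := Finset.mem_image.1 ((S.image ⇑φ).max'_mem (hS.image _))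
  obtain ⟨β, hβ, hβ'⟩ := Finset.mem_image.1 ((S.image ⇑φ).min'_mem (hS.image _))
  exact ⟨α, hα, β, hβ, by rw [suppNorm'_eq φ hS, hα', hβ']⟩

lemma suppNorm'_zero_of_ker {m : ℕ} (φ : (Fin m → ℤ) →+ ℝ) {S : Finset (Fin m → ℤ)}
    (hS : S.Nonempty) (h : ∀ α ∈ S, φ α = 0) : suppNorm' φ S = 0 := by
  obtain ⟨α, hα, β, hβ, he⟩ := suppNorm'_attained φ hS
  rw [he, h α hα, h β hβ, sub_zero]

lemma suppNorm'_congr {m : ℕ} (φ ψ : (Fin m → ℤ) →+ ℝ) {S : Finset (Fin m → ℤ)}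
    (h : ∀ α ∈ S, φ α = ψ α) : suppNorm' φ S = suppNorm' ψ S := by
  unfold suppNorm'
  rw [Finset.image_congr (fun α hα => h α hα)]

lemma suppNorm_eq_suppNorm' {m : ℕ} (φ : (Fin m → ℤ) →+ ℝ) (S : Finset (Fin m → ℤ)) :
    suppNorm φ S = suppNorm' φ S := rfl

/-- If `f, g ≠ 0` and the support of `g` is contained in `ker φ`, then
`‖φ + ψ‖_f - ‖φ + ψ‖_g ≤ (‖φ‖_f - ‖φ‖_g) + (‖ψ‖_f - ‖ψ‖_g)` for all `ψ`. -/
theorem polyNorm_triangle_fraction (K : Type) [DivisionRing K] (m : ℕ) (hm : 0 < m)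
    (R : Type) [Ring R] (L : SkewLaurentRing K m R)
    (φ : (Fin m → ℤ) →+ ℝ)
    (f g : R) (hf : f ≠ 0) (hg : g ≠ 0)
    (cf cg : (Fin m → ℤ) →₀ R)
    (hcf : IsDecomp L f cf) (hcg : IsDecomp L g cg)
    (hker : ∀ α ∈ cg.support, φ α = 0) :
    ∀ ψ : (Fin m → ℤ) →+ ℝ,
      suppNorm (φ + ψ) cf.support - suppNorm (φ + ψ) cg.support ≤
        (suppNorm φ cf.support - suppNorm φ cg.support) +
          (suppNorm ψ cf.support - suppNorm ψ cg.support) := by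
  intro ψ
  have hSf : cf.support.Nonempty := by
    rw [Finset.nonempty_iff_ne_empty]
    intro h
    exact hf (hcf.2.trans (by rw [Finsupp.support_eq_empty.1 h, Finsupp.sum_zero_index]))
  have hSg : cg.support.Nonempty := by
    rw [Finset.nonempty_iff_ne_empty]
    intro h
    exact hg (hcg.2.trans (by rw [Finsupp.support_eq_empty.1 h, Finsupp.sum_zero_index]))
  simp only [suppNorm_eq_suppNorm']
  have h1 : suppNorm' φ cg.support = 0 := suppNorm'_zero_of_ker φ hSg hker
  have h2 : suppNorm' (φ + ψ) cg.support = suppNorm' ψ cg.support :=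
    suppNorm'_congr _ _ (fun α hα => by
      simp [AddMonoidHom.add_apply, hker α hα])
  rw [h1, h2]
  have h3 : suppNorm' (φ + ψ) cf.support ≤ suppNorm' φ cf.support + suppNorm' ψ cf.support := by
    obtain ⟨α, hα, β, hβ, he⟩ := suppNorm'_attained (φ + ψ) hSf
    rw [he]
    have : (φ + ψ) α - (φ + ψ) β = (φ α - φ β) + (ψ α - ψ β) := by
      simp [AddMonoidHom.add_apply]; ring
    rw [this]
    exact add_le_add (sub_le_suppNorm' φ hα hβ) (sub_le_suppNorm' ψ hα hβ)
  linarith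
end

section
/- Let F be a commutative field, m and n positive integers, and let B be an n×n matrix with entries in the Laurent polynomial ring F[t_1^{±1},…,t_m^{±1}] such that det(B) ≠ 0. Then the function φ ↦ ‖φ‖_{det(B)} is a seminorm on the real vector space of group homomorphisms ℤ^m → ℝ (with pointwise addition and real scalar multiplication): ‖φ‖_{det(B)} ≥ 0 for all φ, ‖r·φ‖_{det(B)} = |r|·‖φ‖_{det(B)} for all r ∈ ℝ and all φ, and ‖φ + ψ‖_{det(B)} ≤ ‖φ‖_{det(B)} + ‖ψ‖_{det(B)} for all φ, ψ. -/
lemma suppNorm_eq {m : ℕ} (φ : (Fin m → ℤ) →+ ℝ) (S : Finset (Fin m → ℤ))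
    (hS : S.Nonempty) : suppNorm φ S = S.sup' hS ⇑φ - S.inf' hS ⇑φ := by
  have h1 : (S.image ⇑φ).max = ((S.image ⇑φ).max' (hS.image ⇑φ) : ℝ) :=
    ((S.image ⇑φ).coe_max' (hS.image ⇑φ)).symm
  have h2 : (S.image ⇑φ).min = ((S.image ⇑φ).min' (hS.image ⇑φ) : ℝ) :=
    ((S.image ⇑φ).coe_min' (hS.image ⇑φ)).symm
  have h3 : (S.image ⇑φ).max' (hS.image ⇑φ) = S.sup' hS ⇑φ := by
    rw [Finset.max'_eq_sup', Finset.sup'_image]; rfl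
  have h4 : (S.image ⇑φ).min' (hS.image ⇑φ) = S.inf' hS ⇑φ := by
    rw [Finset.min'_eq_inf', Finset.inf'_image]; rfl
  rw [suppNorm, h1, h2, h3, h4, WithBot.unbotD_coe, WithTop.untopD_coe]

/-- Let `B` be an `n × n` matrix over the Laurent polynomial ring
`F[t₁^{±1},…,t_m^{±1}]` (the group algebra `F[ℤ^m]`) with `det B ≠ 0`.
Then `φ ↦ ‖φ‖_{det B}` is a seminorm on the real vector space of group
homomorphisms `ℤ^m → ℝ`. -/
theorem det_norm_is_seminorm (F : Type) [Field F] (m n : ℕ) (hm : 0 < m) (hn : 0 < n)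
    (B : Matrix (Fin n) (Fin n) (AddMonoidAlgebra F (Fin m → ℤ)))
    (hB : B.det ≠ 0) :
    (∀ φ : (Fin m → ℤ) →+ ℝ, 0 ≤ suppNorm φ B.det.coeff.support) ∧
    (∀ (r : ℝ) (φ : (Fin m → ℤ) →+ ℝ),
      suppNorm (r • φ) B.det.coeff.support = |r| * suppNorm φ B.det.coeff.support) ∧
    (∀ φ ψ : (Fin m → ℤ) →+ ℝ,
      suppNorm (φ + ψ) B.det.coeff.support ≤
        suppNorm φ B.det.coeff.support + suppNorm ψ B.det.coeff.support) := by
  set S := B.det.coeff.support with hSdef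
  have hS : S.Nonempty := Finsupp.support_nonempty_iff.mpr (mt AddMonoidAlgebra.coeff_eq_zero.mp hB)
  have hinfsup : ∀ φ : (Fin m → ℤ) →+ ℝ, S.inf' hS ⇑φ ≤ S.sup' hS ⇑φ := by
    intro φ
    obtain ⟨a, ha⟩ := hS
    exact le_trans (Finset.inf'_le _ ha) (Finset.le_sup' _ ha)
  refine ⟨?_, ?_, ?_⟩
  · intro φ
    rw [suppNorm_eq φ S hS]
    linarith [hinfsup φ]
  · intro r φ
    rw [suppNorm_eq _ S hS, suppNorm_eq _ S hS]
    have happ : ∀ x, (r • φ) x = r * φ x := fun x => rfl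
    obtain ⟨a, haS, ha⟩ := Finset.exists_mem_eq_sup' hS ⇑φ
    obtain ⟨b, hbS, hb⟩ := Finset.exists_mem_eq_inf' hS ⇑φ
    rcases le_or_gt 0 r with hr | hr
    · have hsup : S.sup' hS ⇑(r • φ) = r * S.sup' hS ⇑φ := by
        apply le_antisymm
        · apply Finset.sup'_le
          intro x hx
          rw [happ]
          exact mul_le_mul_of_nonneg_left (Finset.le_sup' _ hx) hr
        · rw [ha]
          exact (happ a) ▸ Finset.le_sup' _ haS
      have hinf : S.inf' hS ⇑(r • φ) = r * S.inf' hS ⇑φ := by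
        apply le_antisymm
        · rw [hb]
          exact (happ b) ▸ Finset.inf'_le _ hbS
        · apply Finset.le_inf'
          intro x hx
          rw [happ]
          exact mul_le_mul_of_nonneg_left (Finset.inf'_le _ hx) hr
      rw [hsup, hinf, abs_of_nonneg hr]; ring
    · have hsup : S.sup' hS ⇑(r • φ) = r * S.inf' hS ⇑φ := by
        apply le_antisymm
        · apply Finset.sup'_le
          intro x hx
          rw [happ]
          exact mul_le_mul_of_nonpos_left (Finset.inf'_le _ hx) hr.le
        · rw [hb]
          exact (happ b) ▸ Finset.le_sup' _ hbS
      have hinf : S.inf' hS ⇑(r • φ) = r * S.sup' hS ⇑φ := by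
        apply le_antisymm
        · rw [ha]
          exact (happ a) ▸ Finset.inf'_le _ haS
        · apply Finset.le_inf'
          intro x hx
          rw [happ]
          exact mul_le_mul_of_nonpos_left (Finset.le_sup' _ hx) hr.le
      rw [hsup, hinf, abs_of_neg hr]; ring
  · intro φ ψ
    rw [suppNorm_eq _ S hS, suppNorm_eq _ S hS, suppNorm_eq _ S hS]
    have hsup : S.sup' hS ⇑(φ + ψ) ≤ S.sup' hS ⇑φ + S.sup' hS ⇑ψ := by
      apply Finset.sup'_le
      intro x hx
      exact add_le_add (Finset.le_sup' _ hx) (Finset.le_sup' _ hx)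
    have hinf : S.inf' hS ⇑φ + S.inf' hS ⇑ψ ≤ S.inf' hS ⇑(φ + ψ) := by
      apply Finset.le_inf'
      intro x hx
      exact add_le_add (Finset.inf'_le _ hx) (Finset.inf'_le _ hx)
    linarith
end
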